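/- Fix λ ≥ 1, let R = 2^λ and M = R/2, and write each complex symbol as s_m = x_{2m} + √−1 · x_{2m+1} with real variables x_0, ..., x_{2R−1}, so that S(s) = Σ_{r=0}^{2R−1} x_r B_r for uniquely determined weight matrices B_r ∈ M_R(ℂ). Partition the 2R real variables into the four groups G_1 = {x_{2m} : 0 ≤ m < M}, G_2 = {x_{2m+1} : 0 ≤ m < M}, G_3 = {x_{2m} : M ≤ m < R}, G_4 = {x_{2m+1} : M ≤ m < R}. Then B_rᴴ B_t + B_tᴴ B_r = 0 whenever x_r and x_t belong to different groups. Hence the design from the extended Clifford algebra A_2^{2^{λ−1}} is four-group decodable. -/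

import Mathlib

/-!
Every weight matrix has the form `B_r = [[a P_k, -b̄ P_k], [b P_k, ā P_k]]`, the complex
`2 × 2` representation of a quaternion `a + b j` tensored with the permutation matrix `P_k`,
where the quaternion is `1`, `i`, `j` or `k` according to the group of `x_r`. The `P_k` are
real symmetric and `P_k P_l = P_{k ⊕ l}` is symmetric in `k, l`, so
`B_rᴴ B_t + B_tᴴ B_r = 2 Re(q̄ q') · diag(P_{k⊕l}, P_{k⊕l})`, and distinct quaternion units
are orthogonal.
-/

open Matrix

namespace DDSTC

/-- Index type `{0, ..., M-1}` with `M = 2^(λ-1)` (so `R = 2^λ = 2*M`,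
and `R×R` matrices are indexed by `Idx lam ⊕ Idx lam`). -/
abbrev Idx (lam : ℕ) := Fin (2 ^ (lam - 1))

/-- Bitwise XOR `⊕` on `{0, ..., 2^(λ-1) - 1}`. -/
def fx {lam : ℕ} (i j : Idx lam) : Idx lam :=
  ⟨i.val ^^^ j.val, Nat.xor_lt_two_pow i.isLt j.isLt⟩

/-- The matrix `P_k ∈ M_M(ℂ)`, with `(P_k)_{ij} = 1` if `j = i ⊕ k` and `0` otherwise. -/
def P {lam : ℕ} (k : Idx lam) : Matrix (Idx lam) (Idx lam) ℂ :=
  Matrix.of fun i j => if j = fx i k then 1 else 0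

/-- The `R×R` design matrix `S(s) = [[C(s), -conj(D(s))], [D(s), conj(C(s))]]`
where `C(s)_{ij} = s_{i⊕j}` and `D(s)_{ij} = s_{M+(i⊕j)}`. -/
def Sdes {lam : ℕ} (s : Idx lam ⊕ Idx lam → ℂ) :
    Matrix (Idx lam ⊕ Idx lam) (Idx lam ⊕ Idx lam) ℂ :=
  Matrix.fromBlocks
    (Matrix.of fun i j => s (Sum.inl (fx i j)))
    (-(Matrix.of fun i j => starRingEnd ℂ (s (Sum.inr (fx i j)))))
    (Matrix.of fun i j => s (Sum.inr (fx i j)))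
    (Matrix.of fun i j => starRingEnd ℂ (s (Sum.inl (fx i j))))

/-- The relay matrices: `A_k = [[P_k, 0], [0, P_k]]` for `0 ≤ k < M` (index `Sum.inl k`)
and `A_{M+k} = [[0, -P_k], [P_k, 0]]` for `0 ≤ k < M` (index `Sum.inr k`). -/
def Arel {lam : ℕ} : Idx lam ⊕ Idx lam → Matrix (Idx lam ⊕ Idx lam) (Idx lam ⊕ Idx lam) ℂ
  | Sum.inl k => Matrix.fromBlocks (P k) 0 0 (P k)
  | Sum.inr k => Matrix.fromBlocks 0 (-(P k)) (P k) 0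

/-- Real-variable index: `(m, false)` is the real part `x_{2m}` and `(m, true)` the
imaginary part `x_{2m+1}` of the complex symbol `s_m`. -/
abbrev RIdx (lam : ℕ) := (Idx lam ⊕ Idx lam) × Bool

/-- The real coordinates of `s`: `coord s (m, false) = Re(s_m)`,
`coord s (m, true) = Im(s_m)`. -/
def coord {lam : ℕ} (s : Idx lam ⊕ Idx lam → ℂ) : RIdx lam → ℝ
  | (m, false) => (s m).re
  | (m, true) => (s m).im

/-- The weight matrix of the real variable indexed by `r`: `B_{2m} = S(e_m)` and
`B_{2m+1} = S(√-1 · e_m)`. -/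
def wB {lam : ℕ} (r : RIdx lam) : Matrix (Idx lam ⊕ Idx lam) (Idx lam ⊕ Idx lam) ℂ :=
  Sdes fun i => if i = r.1 then (if r.2 then Complex.I else 1) else 0

/-- The four groups: `G_1` = real parts of the first `M` symbols, `G_2` = their imaginary
parts, `G_3` = real parts of the last `M` symbols, `G_4` = their imaginary parts. -/
def grp4 {lam : ℕ} : RIdx lam → Fin 4
  | (Sum.inl _, false) => 0
  | (Sum.inl _, true) => 1
  | (Sum.inr _, false) => 2
  | (Sum.inr _, true) => 3

lemma fx_fx {lam : ℕ} (i j : Idx lam) : fx i (fx i j) = j := by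
  simp [fx]

lemma fx_comm {lam : ℕ} (i j : Idx lam) : fx i j = fx j i := by
  simp [fx, Nat.xor_comm]

lemma fx_assoc {lam : ℕ} (i j k : Idx lam) : fx (fx i j) k = fx i (fx j k) := by
  simp [fx, Nat.xor_assoc]

lemma fx_eq_iff {lam : ℕ} {i j m : Idx lam} : fx i j = m ↔ j = fx i m := by
  constructor <;> rintro rfl <;> rw [fx_fx]

lemma P_apply {lam : ℕ} (k i j : Idx lam) : P k i j = if fx i j = k then 1 else 0 := by
  simp [P, fx_eq_iff]

lemma P_conjTranspose {lam : ℕ} (k : Idx lam) : (P k)ᴴ = P k := by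
  ext i j
  simp [P_apply, fx_comm i j, apply_ite (star : ℂ → ℂ)]

lemma P_mul_P {lam : ℕ} (k l : Idx lam) : P k * P l = P (fx k l) := by
  ext i j
  rw [mul_apply, Finset.sum_eq_single (fx i k)]
  · simp [P, fx_assoc]
  · intro m _ hm
    simp [P, hm]
  · simp

lemma P_conjTranspose_mul_comm {lam : ℕ} (k l : Idx lam) :
    (P k)ᴴ * P l = (P l)ᴴ * P k := by
  rw [P_conjTranspose, P_conjTranspose, P_mul_P, P_mul_P, fx_comm]

section QuatBlock

variable {m n : Type*}

/-- `(a, b)` encodes the quaternion `a + b j`; this is its complex `2 × 2` representation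
tensored with `X`. -/
def quatBlock (q : ℂ × ℂ) (X : Matrix m n ℂ) : Matrix (m ⊕ m) (n ⊕ n) ℂ :=
  fromBlocks (q.1 • X) (-(star q.2 • X)) (q.2 • X) (star q.1 • X)

lemma quatBlock_conjTranspose_mul_add [Fintype m] {q q' : ℂ × ℂ} {X Y : Matrix m n ℂ}
    (hXY : Xᴴ * Y = Yᴴ * X) :
    (quatBlock q X)ᴴ * quatBlock q' Y + (quatBlock q' Y)ᴴ * quatBlock q X =
      (star q.1 * q'.1 + star q.2 * q'.2 + star q'.1 * q.1 + star q'.2 * q.2) •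
        fromBlocks (Xᴴ * Y) 0 0 (Xᴴ * Y) := by
  simp only [quatBlock, fromBlocks_conjTranspose, fromBlocks_multiply, fromBlocks_add,
    fromBlocks_smul, conjTranspose_smul, conjTranspose_neg, Matrix.smul_mul, Matrix.mul_smul,
    Matrix.neg_mul, Matrix.mul_neg, star_star, ← hXY, smul_zero]
  congr 1 <;> module

end QuatBlock

def quatUnit : Fin 4 → ℂ × ℂ := ![(1, 0), (Complex.I, 0), (0, 1), (0, Complex.I)]

lemma quatUnit_pairing_eq_zero {g h : Fin 4} (hgh : g ≠ h) :
    star (quatUnit g).1 * (quatUnit h).1 + star (quatUnit g).2 * (quatUnit h).2 +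
      star (quatUnit h).1 * (quatUnit g).1 + star (quatUnit h).2 * (quatUnit g).2 = 0 := by
  fin_cases g <;> fin_cases h <;> simp_all [quatUnit]

lemma Sdes_single_inl {lam : ℕ} (k : Idx lam) (c : ℂ) :
    Sdes (Pi.single (Sum.inl k) c) = quatBlock (c, 0) (P k) := by
  ext (i | i) (j | j) <;>
    simp [Sdes, quatBlock, P_apply, Pi.single_apply, apply_ite (starRingEnd ℂ)]

lemma Sdes_single_inr {lam : ℕ} (k : Idx lam) (c : ℂ) :
    Sdes (Pi.single (Sum.inr k) c) = quatBlock (0, c) (P k) := by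
  ext (i | i) (j | j) <;>
    simp [Sdes, quatBlock, P_apply, Pi.single_apply, apply_ite (starRingEnd ℂ)]

lemma wB_eq_Sdes_single {lam : ℕ} (r : RIdx lam) :
    wB r = Sdes (Pi.single r.1 (if r.2 then Complex.I else 1)) := by
  simp only [wB]
  congr 1
  funext i
  rw [Pi.single_apply]

lemma exists_wB_eq_quatBlock {lam : ℕ} (r : RIdx lam) :
    ∃ k, wB r = quatBlock (quatUnit (grp4 r)) (P k) := by
  rcases r with ⟨k | k, _ | _⟩ <;>
    exact ⟨k, by simp [wB_eq_Sdes_single, Sdes_single_inl, Sdes_single_inr, grp4, quatUnit]⟩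

def sdesLinearMap (lam : ℕ) :
    (Idx lam ⊕ Idx lam → ℂ) →ₗ[ℝ] Matrix (Idx lam ⊕ Idx lam) (Idx lam ⊕ Idx lam) ℂ where
  toFun := Sdes
  map_add' s t := by ext (i | i) (j | j) <;> simp [Sdes, add_comm]
  map_smul' x s := by ext (i | i) (j | j) <;> simp [Sdes]

lemma sum_coord_smul_single {lam : ℕ} (s : Idx lam ⊕ Idx lam → ℂ) :
    ∑ r : RIdx lam, coord s r • Pi.single r.1 (if r.2 then Complex.I else 1) = s := by
  ext m
  simp [Fintype.sum_prod_type, coord, Finset.sum_apply, Pi.single_apply, Complex.ext_iff]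

lemma Sdes_eq_sum_coord_smul_wB {lam : ℕ} (s : Idx lam ⊕ Idx lam → ℂ) :
    Sdes s = ∑ r : RIdx lam, (coord s r : ℂ) • wB r := by
  conv_lhs => rw [← sum_coord_smul_single s]
  simp only [Complex.coe_smul, wB_eq_Sdes_single]
  change sdesLinearMap lam _ = ∑ r, coord s r • sdesLinearMap lam _
  simp only [map_sum, map_smul]

theorem stmt14_general (lam : ℕ) :
    (∀ s : Idx lam ⊕ Idx lam → ℂ,
      Sdes s = ∑ r : RIdx lam, (coord s r : ℂ) • wB r) ∧
    (∀ r t : RIdx lam, grp4 r ≠ grp4 t →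
      (wB r)ᴴ * wB t + (wB t)ᴴ * wB r = 0) := by
  refine ⟨Sdes_eq_sum_coord_smul_wB, fun r t hrt => ?_⟩
  obtain ⟨k, hr⟩ := exists_wB_eq_quatBlock r
  obtain ⟨l, ht⟩ := exists_wB_eq_quatBlock t
  rw [hr, ht, quatBlock_conjTranspose_mul_add (P_conjTranspose_mul_comm k l),
    quatUnit_pairing_eq_zero hrt, zero_smul]

/-- writing `s_m = x_{2m} + √-1 x_{2m+1}`, the design decomposes as
`S(s) = Σ_r x_r B_r` for the weight matrices `B_r`, and `B_rᴴ B_t + B_tᴴ B_r = 0`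
whenever `x_r` and `x_t` lie in different groups of the four-group partition; hence the
design from the extended Clifford algebra is four-group decodable. -/
theorem stmt14 (lam : ℕ) (hlam : 1 ≤ lam) :
    (∀ s : Idx lam ⊕ Idx lam → ℂ,
      Sdes s = ∑ r : RIdx lam, (coord s r : ℂ) • wB r) ∧
    (∀ r t : RIdx lam, grp4 r ≠ grp4 t →
      (wB r)ᴴ * wB t + (wB t)ᴴ * wB r = 0) :=
  stmt14_general lam
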